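/- Define S_{C1,C2}(x) = Σ_{m,n≥0} q^{4·C(m+1,2)+2·C(n+1,2)+2mn+C1·m+C2·n} x^{2m+n} / ((q;q)_m (q;q)_n). Then S_{−2,−1}(x) − S_{−1,−1}(x) = x²q² S_{0,0}(xq). -/

import Mathlib

noncomputable section

/-- Base coefficient ring: formal Laurent series over ℚ (a field), so that
integer powers of `q` and inverses of Pochhammer symbols make sense. -/
abbrev R : Type := LaurentSeries ℚ

/-- The formal variable `q`. -/
def q : R := HahnSeries.single 1 1

/-- The finite q-Pochhammer symbol `(a; b)_n = ∏_{j=1}^n (1 - a b^(j-1))`. -/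
def poch (a b : R) (n : ℕ) : R := ∏ j ∈ Finset.range n, (1 - a * b ^ j)

/-- Formal substitution `x ↦ c·x` in a power series in `x` over `R`. -/
def subst (c : R) (f : PowerSeries R) : PowerSeries R :=
  PowerSeries.mk fun k => c ^ k * PowerSeries.coeff k f

/-- The Andrews–Gordon (k=3) double series
`S_{C1,C2}(x) = Σ_{m,n} q^{4C(m+1,2)+2C(n+1,2)+2mn+C1 m+C2 n} x^{2m+n}/((q;q)_m (q;q)_n)`,
as a power series in `x` over `R`. -/
def S (C1 C2 : ℤ) : PowerSeries R :=
  PowerSeries.mk fun k =>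
    ∑ p ∈ (Finset.range (k+1) ×ˢ Finset.range (k+1)).filter
        (fun p => 2 * p.1 + p.2 = k),
      q ^ (4 * ((p.1+1).choose 2 : ℤ) + 2 * ((p.2+1).choose 2 : ℤ)
            + 2 * (p.1 : ℤ) * (p.2 : ℤ) + C1 * (p.1 : ℤ) + C2 * (p.2 : ℤ))
        * (poch q q p.1)⁻¹ * (poch q q p.2)⁻¹

/-!
Compare the two sides summand by summand. The `(m, n)` summands of `S (-2) (-1)` and
`S (-1) (-1)` differ by the factor `1 - q ^ m`, which kills the `m = 0` summands and otherwise
cancels the last factor of `(q; q)_m`. After the shift `m ↦ m + 1` the exponent of `q` grows by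
`2m + n + 2`, which is the factor `q ^ 2 * q ^ (2m + n)` that `x² q²` and `x ↦ q x` produce on
the right.
-/

open PowerSeries hiding subst
open Finset

section DoubleSeries

variable {A : Type*}

/-- `∑_{m,n} a m n X^(2m+n)`. -/
def doubleSeries [Semiring A] (a : ℕ → ℕ → A) : PowerSeries A :=
  mk fun k =>
    ∑ p ∈ (range (k + 1) ×ˢ range (k + 1)).filter (fun p => 2 * p.1 + p.2 = k), a p.1 p.2

theorem coeff_doubleSeries [Semiring A] (a : ℕ → ℕ → A) (k : ℕ) :
    coeff k (doubleSeries a) = ∑ m ∈ range (k / 2 + 1), a m (k - 2 * m) := by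
  rw [doubleSeries, coeff_mk]
  refine sum_nbij' Prod.fst (fun m => (m, k - 2 * m)) ?_ ?_ ?_ ?_ ?_ <;>
    simp only [mem_filter, mem_product, mem_range, Prod.forall, Prod.mk.injEq, true_and]
  · omega
  · omega
  · omega
  · simp
  · rintro m n ⟨-, rfl⟩
    rw [Nat.add_sub_cancel_left]

theorem doubleSeries_sub [Ring A] (a b : ℕ → ℕ → A) :
    doubleSeries a - doubleSeries b = doubleSeries (fun m n => a m n - b m n) := by
  ext k : 1
  simp only [map_sub, coeff_doubleSeries, sum_sub_distrib]

theorem C_mul_doubleSeries [Semiring A] (c : A) (a : ℕ → ℕ → A) :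
    C c * doubleSeries a = doubleSeries (fun m n => c * a m n) := by
  ext k : 1
  simp only [coeff_C_mul, coeff_doubleSeries, mul_sum]

theorem doubleSeries_eq_X_sq_mul [Semiring A] (a : ℕ → ℕ → A) (ha : ∀ n, a 0 n = 0) :
    doubleSeries a = X ^ 2 * doubleSeries (fun m n => a (m + 1) n) := by
  ext k : 1
  rw [coeff_X_pow_mul', coeff_doubleSeries, sum_range_succ', ha, add_zero]
  split_ifs with hk
  · obtain ⟨k, rfl⟩ := Nat.exists_eq_add_of_le' hk
    rw [coeff_doubleSeries, Nat.add_sub_cancel, show (k + 2) / 2 = k / 2 + 1 by omega]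
    refine sum_congr rfl fun m _ => ?_
    rw [show k + 2 - 2 * (m + 1) = k - 2 * m by omega]
  · rw [show k / 2 = 0 by omega, sum_range_zero]

end DoubleSeries

theorem subst_doubleSeries (c : R) (a : ℕ → ℕ → R) :
    subst c (doubleSeries a) = doubleSeries (fun m n => c ^ (2 * m + n) * a m n) := by
  ext k : 1
  simp only [subst, coeff_mk, coeff_doubleSeries, mul_sum]
  refine sum_congr rfl fun m hm => ?_
  rw [mem_range] at hm
  rw [show 2 * m + (k - 2 * m) = k by omega]

theorem poch_succ (a b : R) (n : ℕ) : poch a b (n + 1) = poch a b n * (1 - a * b ^ n) :=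
  prod_range_succ (fun j => 1 - a * b ^ j) n

theorem q_ne_zero : q ≠ 0 := HahnSeries.single_ne_zero one_ne_zero

theorem one_sub_q_pow_ne_zero {n : ℕ} (hn : n ≠ 0) : (1 : R) - q ^ n ≠ 0 := by
  have h : (1 : R) - q ^ n = HahnSeries.ofPowerSeries ℤ ℚ (1 - X ^ n) := by
    rw [map_sub, map_one, map_pow, HahnSeries.ofPowerSeries_X]
    rfl
  rw [h, map_ne_zero_iff _ HahnSeries.ofPowerSeries_injective]
  intro h0
  simpa [hn] using congrArg constantCoeff h0

def agExponent (C1 C2 : ℤ) (m n : ℕ) : ℤ :=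
  4 * ((m + 1).choose 2 : ℤ) + 2 * ((n + 1).choose 2 : ℤ) + 2 * (m : ℤ) * (n : ℤ)
    + C1 * (m : ℤ) + C2 * (n : ℤ)

def agTerm (C1 C2 : ℤ) (m n : ℕ) : R :=
  q ^ agExponent C1 C2 m n * (poch q q m)⁻¹ * (poch q q n)⁻¹

theorem S_eq_doubleSeries (C1 C2 : ℤ) : S C1 C2 = doubleSeries (agTerm C1 C2) := rfl

theorem agTerm_zero_left (C1 C1' C2 : ℤ) (n : ℕ) : agTerm C1 C2 0 n = agTerm C1' C2 0 n := by
  simp [agTerm, agExponent]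

theorem q_pow_mul_agTerm (C1 C2 : ℤ) (m n : ℕ) :
    q ^ (2 * m + n) * agTerm C1 C2 m n = agTerm (C1 + 2) (C2 + 1) m n := by
  have hexp :
      agExponent (C1 + 2) (C2 + 1) m n = ((2 * m + n : ℕ) : ℤ) + agExponent C1 C2 m n := by
    simp only [agExponent]
    push_cast
    ring
  rw [agTerm, agTerm, hexp, zpow_add₀ q_ne_zero, zpow_natCast]
  ring

theorem agTerm_sub_succ (C1 C2 : ℤ) (m n : ℕ) :
    agTerm (C1 - 1) C2 (m + 1) n - agTerm C1 C2 (m + 1) n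
      = q ^ (C1 + 3) * agTerm (C1 + 3) (C2 + 2) m n := by
  have hchoose : ((m + 2).choose 2 : ℤ) = ((m + 1).choose 2 : ℤ) + (m + 1) := by
    rw [Nat.choose_succ_succ (m + 1) 1, Nat.choose_one_right]
    push_cast
    ring
  have hexp :
      agExponent C1 C2 (m + 1) n = agExponent (C1 - 1) C2 (m + 1) n + ((m + 1 : ℕ) : ℤ) := by
    simp only [agExponent]
    push_cast
    ring
  have hexp' :
      agExponent (C1 - 1) C2 (m + 1) n = (C1 + 3) + agExponent (C1 + 3) (C2 + 2) m n := by
    simp only [agExponent, Nat.cast_add, Nat.cast_one, hchoose]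
    ring
  have hcancel : (1 - q ^ (m + 1)) * (1 - q ^ (m + 1))⁻¹ = 1 :=
    mul_inv_cancel₀ (one_sub_q_pow_ne_zero m.succ_ne_zero)
  rw [agTerm, agTerm, agTerm, hexp, hexp', poch_succ, ← pow_succ', mul_inv,
    zpow_add₀ q_ne_zero _ ((m + 1 : ℕ) : ℤ), zpow_natCast, zpow_add₀ q_ne_zero (C1 + 3)]
  linear_combination q ^ (C1 + 3) * q ^ agExponent (C1 + 3) (C2 + 2) m n * (poch q q m)⁻¹
    * (poch q q n)⁻¹ * hcancel

theorem andrews_first_equation :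
    S (-2) (-1) - S (-1) (-1)
      = PowerSeries.X ^ 2 * PowerSeries.C (q ^ 2) * subst q (S 0 0) := by
  simp only [S_eq_doubleSeries]
  rw [doubleSeries_sub,
    doubleSeries_eq_X_sq_mul _ fun n => sub_eq_zero.mpr (agTerm_zero_left _ _ _ n),
    subst_doubleSeries, mul_assoc, C_mul_doubleSeries]
  congr 2
  ext m n
  rw [show (-2 : ℤ) = -1 - 1 by norm_num, agTerm_sub_succ, q_pow_mul_agTerm]
  norm_num
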